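/- arXiv:1912.06061 — 2 statements merged into one kernel-verified Lean document; each statement's English description precedes it below -/
import Mathlib

section
/- Let H be a Hilbert space, x ∈ H, V a closed subspace of H, and (u_k)_{k=1}^m unitaries on H such that for each k, ||P_V x|| = ||P_{u_k V}(u_k x)||, and the subspaces (u_k V)_{k=1}^m are pairwise orthogonal. Then m ||P_V x||^2 ≤ 2 ∑_{k=1}^m ||u_k x - x||^2 + 2 ||x||^2. -/
/-- Counting estimate: if `V` is a closed subspace of a complex Hilbert space and
`u_1, …, u_m` are unitaries whose images `W k = u_k V` are pairwise orthogonal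
closed subspaces, then `m ‖P_V x‖² ≤ 2 ∑_k ‖u_k x - x‖² + 2 ‖x‖²`. -/
theorem stmt2 {H : Type*} [NormedAddCommGroup H] [InnerProductSpace ℂ H]
    (m : ℕ) (u : Fin m → (H ≃ₗᵢ[ℂ] H)) (V : Submodule ℂ H) (W : Fin m → Submodule ℂ H)
    [CompleteSpace V] [∀ k, CompleteSpace (W k)]
    (hW : ∀ k y, y ∈ W k ↔ ∃ v ∈ V, u k v = y)
    (horth : ∀ j k, j ≠ k → ∀ v ∈ W j, ∀ w ∈ W k, inner ℂ v w = (0 : ℂ))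
    (x : H) :
    (m : ℝ) * ‖(Submodule.orthogonalProjection V x : H)‖ ^ 2 ≤
      2 * ∑ k : Fin m, ‖u k x - x‖ ^ 2 + 2 * ‖x‖ ^ 2 := by
  set y : Fin m → H := fun k => (Submodule.orthogonalProjection (W k) x : H) with hy
  have hmem : ∀ k, y k ∈ W k := fun k => (Submodule.orthogonalProjection (W k) x).2
  -- key: P_{W k}(u k x) = u k (P_V x)
  have hproj : ∀ k, (Submodule.orthogonalProjection (W k) (u k x) : H) = u k (Submodule.orthogonalProjection V x) := by
    intro k
    apply Submodule.eq_starProjection_of_mem_of_inner_eq_zero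
    · exact (hW k _).2 ⟨_, (Submodule.orthogonalProjection V x).2, rfl⟩
    · intro w hw
      obtain ⟨v, hv, rfl⟩ := (hW k w).1 hw
      rw [← map_sub, LinearIsometryEquiv.inner_map_map]
      exact Submodule.mem_orthogonal' V _ |>.1 (Submodule.sub_starProjection_mem_orthogonal x) v hv
  -- Bessel-type estimate: ∑ ‖y k‖² ≤ ‖x‖²
  have hbessel : ∑ k : Fin m, ‖y k‖ ^ 2 ≤ ‖x‖ ^ 2 := by
    set Y : H := ∑ k, y k with hY
    have hinner : ∀ k, (inner ℂ x (y k) : ℂ) = ((‖y k‖ : ℂ) ^ 2) := by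
      intro k
      have h0 : (inner ℂ (x - y k) (y k) : ℂ) = 0 :=
        Submodule.mem_orthogonal' (W k) _ |>.1 (Submodule.sub_starProjection_mem_orthogonal x)
          (y k) (hmem k)
      rw [inner_sub_left, sub_eq_zero] at h0
      rw [h0, inner_self_eq_norm_sq_to_K]
      norm_cast
    have hYx : (inner ℂ x Y : ℂ) = ((∑ k, ‖y k‖ ^ 2 : ℝ) : ℂ) := by
      rw [hY, inner_sum]
      push_cast
      exact Finset.sum_congr rfl fun k _ => hinner k
    have hYnorm : ‖Y‖ ^ 2 = ∑ k, ‖y k‖ ^ 2 := by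
      have : (inner ℂ Y Y : ℂ) = ((∑ k, ‖y k‖ ^ 2 : ℝ) : ℂ) := by
        rw [hY, sum_inner]
        push_cast
        refine Finset.sum_congr rfl fun j _ => ?_
        rw [inner_sum, Finset.sum_eq_single j]
        · exact (inner_self_eq_norm_sq_to_K (𝕜 := ℂ) (y j))
        · intro k _ hkj
          exact horth j k (fun h => hkj (h ▸ rfl)) (y j) (hmem j) (y k) (hmem k)
        · intro h; exact absurd (Finset.mem_univ j) h
      have h2 := inner_self_eq_norm_sq (𝕜 := ℂ) Y
      rw [this] at h2
      simpa [← Complex.ofReal_pow] using h2.symm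
    set s : ℝ := ∑ k, ‖y k‖ ^ 2 with hs
    have hs0 : 0 ≤ s := Finset.sum_nonneg fun k _ => sq_nonneg _
    have hle : s ≤ ‖x‖ * ‖Y‖ := by
      calc s = ‖(inner ℂ x Y : ℂ)‖ := by rw [hYx]; simp [abs_of_nonneg hs0]
      _ ≤ ‖x‖ * ‖Y‖ := norm_inner_le_norm x Y
    nlinarith [sq_nonneg (‖x‖ - ‖Y‖), norm_nonneg Y, norm_nonneg x]
  -- pointwise estimate
  have hpt : ∀ k : Fin m, ‖(Submodule.orthogonalProjection V x : H)‖ ^ 2 ≤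
      2 * ‖u k x - x‖ ^ 2 + 2 * ‖y k‖ ^ 2 := by
    intro k
    have h1 : ‖(Submodule.orthogonalProjection V x : H)‖ = ‖(Submodule.orthogonalProjection (W k) (u k x) : H)‖ := by
      rw [hproj k, (u k).norm_map]
    have h2 : ‖(Submodule.orthogonalProjection (W k) (u k x) : H) - y k‖ ≤ ‖u k x - x‖ := by
      have : (Submodule.orthogonalProjection (W k) (u k x) : H) - y k
          = (Submodule.orthogonalProjection (W k) (u k x - x) : H) := by
        rw [map_sub]; rfl
      rw [this]
      have := ContinuousLinearMap.le_opNorm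
        (Submodule.orthogonalProjection (W k)) (u k x - x)
      calc ‖(Submodule.orthogonalProjection (W k) (u k x - x) : H)‖
          = ‖Submodule.orthogonalProjection (W k) (u k x - x)‖ := rfl
        _ ≤ ‖Submodule.orthogonalProjection (W k)‖ * ‖u k x - x‖ := this
        _ ≤ 1 * ‖u k x - x‖ := by
            exact mul_le_mul_of_nonneg_right (Submodule.orthogonalProjection_norm_le _) (norm_nonneg _)
        _ = ‖u k x - x‖ := one_mul _
    have h3 : ‖(Submodule.orthogonalProjection (W k) (u k x) : H)‖ ≤
        ‖(Submodule.orthogonalProjection (W k) (u k x) : H) - y k‖ + ‖y k‖ := by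
      simpa using norm_add_le ((Submodule.orthogonalProjection (W k) (u k x) : H) - y k) (y k)
    rw [h1]
    have h4 := pow_le_pow_left₀ (norm_nonneg _) h3 2
    have h5 := pow_le_pow_left₀ (norm_nonneg _) h2 2
    nlinarith [sq_nonneg (‖(Submodule.orthogonalProjection (W k) (u k x) : H) - y k‖ - ‖y k‖)]
  calc (m : ℝ) * ‖(Submodule.orthogonalProjection V x : H)‖ ^ 2
      = ∑ _k : Fin m, ‖(Submodule.orthogonalProjection V x : H)‖ ^ 2 := by
        rw [Finset.sum_const, Finset.card_univ, Fintype.card_fin, nsmul_eq_mul]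
    _ ≤ ∑ k : Fin m, (2 * ‖u k x - x‖ ^ 2 + 2 * ‖y k‖ ^ 2) :=
        Finset.sum_le_sum fun k _ => hpt k
    _ = 2 * ∑ k : Fin m, ‖u k x - x‖ ^ 2 + 2 * ∑ k, ‖y k‖ ^ 2 := by
        rw [Finset.sum_add_distrib, ← Finset.mul_sum, ← Finset.mul_sum]
    _ ≤ 2 * ∑ k : Fin m, ‖u k x - x‖ ^ 2 + 2 * ‖x‖ ^ 2 := by linarith
end

section
/- In the free group F_n with free generators a_1, ..., a_n (n ≥ 2), let H = ⟨a_1⟩ be the cyclic subgroup generated by a_1. Then for any elements g, h ∈ F_n \ H, the set {k ∈ ℤ : g a_1^k h ∈ H} is finite. -/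
/-!
If `g a^k₁ h` and `g a^k₂ h` both lie in `⟨a⟩`, then so does their quotient
`g a^(k₁ - k₂) g⁻¹`. But `⟨a⟩` is malnormal: if `x a^d x⁻¹ ∈ ⟨a⟩` with `d ≠ 0`, strip from the
reduced word of `x` its trailing `a`-letters; if anything is left, its last letter is not an
`a`-letter, so conjugating `a^d` by it causes no cancellation and produces a reduced word with
letters other than `a`. Hence `g ∈ ⟨a⟩`, unless `k₁ = k₂`: the set has at most one element.
-/

open Subgroup

namespace FreeGroup

variable {α : Type*} [DecidableEq α] {a : α}

theorem fst_eq_of_mem_toWord_of_mem_zpowers {x : FreeGroup α} (hx : x ∈ zpowers (of a))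
    {p : α × Bool} (hp : p ∈ x.toWord) : p.1 = a := by
  obtain ⟨k, rfl⟩ := mem_zpowers_iff.mp hx
  obtain ⟨m, rfl | rfl⟩ := Int.eq_nat_or_neg k <;>
    simp_all [toWord_of_pow, toWord_inv, invRev]

omit [DecidableEq α] in
theorem mk_singleton_mem_zpowers (p : α × Bool) : mk [p] ∈ zpowers (of p.1) := by
  obtain ⟨b, _ | _⟩ := p
  · rw [← inv_mem_iff, inv_mk]
    exact mem_zpowers _
  · exact mem_zpowers _

theorem IsReduced.invRev {L : List (α × Bool)} (h : IsReduced L) : IsReduced (invRev L) := by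
  rw [isReduced_iff_reduce_eq] at *
  rw [reduce_invRev, h]

theorem IsReduced.append_toWord_of_zpow {w : List (α × Bool)} (hw : IsReduced w)
    (hlast : ∀ p ∈ w.getLast?, p.1 ≠ a) (d : ℤ) : IsReduced (w ++ (of a ^ d).toWord) :=
  hw.append isReduced_toWord fun p hp _ hq hpq => (hlast p hp <| hpq.trans <|
    fst_eq_of_mem_toWord_of_mem_zpowers (zpow_mem_zpowers _ _) (List.mem_of_mem_head? hq)).elim

theorem toWord_conj_of_zpow {w : List (α × Bool)} (hw : IsReduced w)
    (hlast : ∀ p ∈ w.getLast?, p.1 ≠ a) {d : ℤ} (hd : d ≠ 0) :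
    (mk w * of a ^ d * (mk w)⁻¹).toWord = w ++ (of a ^ d).toWord ++ invRev w := by
  have hright : IsReduced ((of a ^ d).toWord ++ invRev w) := by
    simpa [invRev_append, ← toWord_inv, ← zpow_neg] using
      (hw.append_toWord_of_zpow hlast (-d)).invRev
  have hne : (of a ^ d).toWord ≠ [] := by
    rw [Ne, toWord_eq_nil_iff]
    exact (IsMulTorsionFree.zpow_eq_one_iff_left hd).not.mpr (of_ne_one a)
  have hmk : mk w * of a ^ d * (mk w)⁻¹ = mk (w ++ (of a ^ d).toWord ++ invRev w) := by
    rw [← mul_mk, ← mul_mk, ← inv_mk, mk_toWord]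
  rw [hmk, toWord_mk,
    (IsReduced.append_overlap (hw.append_toWord_of_zpow hlast d) hright hne).reduce_eq]

theorem mem_zpowers_of_conj_zpow_mem {x : FreeGroup α} {d : ℤ} (hd : d ≠ 0)
    (hx : x * of a ^ d * x⁻¹ ∈ zpowers (of a)) : x ∈ zpowers (of a) := by
  suffices ∀ w : List (α × Bool), IsReduced w →
      mk w * of a ^ d * (mk w)⁻¹ ∈ zpowers (of a) → mk w ∈ zpowers (of a) by
    simpa only [mk_toWord] using this x.toWord isReduced_toWord (by rwa [mk_toWord])
  intro w
  induction w using List.reverseRecOn with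
  | nil => exact fun _ _ => one_mem _
  | append_singleton t p ih =>
    intro hw hconj
    by_cases hp : p.1 = a
    · obtain ⟨k, hk⟩ := mem_zpowers_iff.mp (hp ▸ mk_singleton_mem_zpowers p)
      rw [← mul_mk, ← hk] at hconj ⊢
      refine mul_mem (ih (hw.infix ⟨[], [p], rfl⟩) ?_) (zpow_mem_zpowers _ _)
      convert hconj using 1
      group
    · have hletter := fst_eq_of_mem_toWord_of_mem_zpowers hconj (p := p)
      rw [toWord_conj_of_zpow hw (by simpa using hp) hd] at hletter
      exact (hp (hletter (by simp))).elim

theorem subsingleton_setOf_mul_zpow_mul_mem_zpowers {g : FreeGroup α}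
    (hg : g ∉ zpowers (of a)) (h : FreeGroup α) :
    {k : ℤ | g * of a ^ k * h ∈ zpowers (of a)}.Subsingleton := by
  intro k₁ hk₁ k₂ hk₂
  by_contra hne
  refine hg (mem_zpowers_of_conj_zpow_mem (sub_ne_zero.mpr hne) ?_)
  have hquot : g * of a ^ (k₁ - k₂) * g⁻¹ = (g * of a ^ k₁ * h) * (g * of a ^ k₂ * h)⁻¹ := by
    group
  rw [hquot]
  exact mul_mem hk₁ (inv_mem hk₂)

end FreeGroup

/-- In the free group `F_n` on `n ≥ 2` generators, let `H = ⟨a₁⟩` be the cyclic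
subgroup generated by the first generator `a₁`.  For any `g, h ∈ F_n \ H`, the set
`{k ∈ ℤ : g a₁^k h ∈ H}` is finite. -/
theorem stmt6 (n : ℕ) (hn : 2 ≤ n)
    (H : Subgroup (FreeGroup (Fin n)))
    (hH : H = Subgroup.zpowers (FreeGroup.of (⟨0, by omega⟩ : Fin n)))
    (g h : FreeGroup (Fin n)) (hg : g ∉ H) :
    {k : ℤ | g * (FreeGroup.of (⟨0, by omega⟩ : Fin n)) ^ k * h ∈ H}.Finite := by
  subst hH
  exact (FreeGroup.subsingleton_setOf_mul_zpow_mul_mem_zpowers hg h).finite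
end
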